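/- arXiv:2112.15410 — 4 statements merged into one kernel-verified Lean document; each statement's English description precedes it below -/
import Mathlib

section
/- Let a, b ≥ 0 with a ≥ l·b for l ≥ 1, let 0 < μ ≤ 1, and 0 ≤ α ≤ 1. Then (a + μb)^α ≤ a^α + ((μ+l)^α - l^α)·b^α. -/
/-! The map `x ↦ x ^ α` is concave on `[0, ∞)`, so its increments `(x + c) ^ α - x ^ α` over a
fixed step `c ≥ 0` decrease in `x`. Taking the step `μ b` and comparing the base points
`l b ≤ a` gives the claim, since `(l b + μ b) ^ α - (l b) ^ α = ((μ + l) ^ α - l ^ α) b ^ α`. -/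

theorem ConcaveOn.map_add_sub_map_le {𝕜 β : Type*} [Field 𝕜] [LinearOrder 𝕜]
    [IsStrictOrderedRing 𝕜] [AddCommGroup β] [PartialOrder β] [IsOrderedAddMonoid β]
    [Module 𝕜 β] {s : Set 𝕜} {f : 𝕜 → β} (hf : ConcaveOn 𝕜 s f) {x y c : 𝕜}
    (hx : x ∈ s) (hyc : y + c ∈ s) (hxy : x ≤ y) (hc : 0 ≤ c) :
    f (y + c) - f y ≤ f (x + c) - f x := by
  rcases (add_nonneg (sub_nonneg.2 hxy) hc).eq_or_lt with hd | hd
  · obtain rfl : c = 0 := by linarith [sub_nonneg.2 hxy]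
    simp
  -- `y` and `x + c` are mirror-image convex combinations of `x` and `y + c`; add the two
  -- concavity inequalities.
  set t := c / (y - x + c)
  have ht : 0 ≤ t := div_nonneg hc hd.le
  have ht' : 0 ≤ 1 - t := by
    rw [sub_nonneg, div_le_one hd]
    linarith
  have hy : y = t * x + (1 - t) * (y + c) := by simp only [t]; field_simp; ring
  have hxc : x + c = (1 - t) * x + t * (y + c) := by simp only [t]; field_simp; ring
  have h₁ := hf.2 hx hyc ht ht' (add_sub_cancel t 1)
  have h₂ := hf.2 hx hyc ht' ht (sub_add_cancel 1 t)
  simp only [smul_eq_mul, ← hy, ← hxc] at h₁ h₂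
  have hsum : (t • f x + (1 - t) • f (y + c)) + ((1 - t) • f x + t • f (y + c))
      = f x + f (y + c) := by
    simp only [sub_smul, one_smul]
    abel
  rw [sub_le_sub_iff, add_comm (f (y + c)), ← hsum, add_comm (f (x + c))]
  exact add_le_add h₁ h₂

theorem Real.add_rpow_sub_rpow_le_of_le {p x y c : ℝ} (hp₀ : 0 ≤ p) (hp₁ : p ≤ 1) (hx : 0 ≤ x)
    (hxy : x ≤ y) (hc : 0 ≤ c) : (y + c) ^ p - y ^ p ≤ (x + c) ^ p - x ^ p :=
  (Real.concaveOn_rpow hp₀ hp₁).map_add_sub_map_le hx (by simp only [Set.mem_Ici]; linarith)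
    hxy hc

theorem stmt_11_general (a b μ l α : ℝ) (hb : 0 ≤ b)
    (hμ0 : 0 < μ) (hl : 1 ≤ l)
    (h : l * b ≤ a) (hα0 : 0 ≤ α) (hα1 : α ≤ 1) :
    (a + μ * b) ^ α ≤ a ^ α + ((μ + l) ^ α - l ^ α) * b ^ α := by
  have hl₀ : 0 ≤ l := zero_le_one.trans hl
  have key := Real.add_rpow_sub_rpow_le_of_le hα0 hα1 (mul_nonneg hl₀ hb) h
    (mul_nonneg hμ0.le hb)
  have hstep : (l * b + μ * b) ^ α - (l * b) ^ α = ((μ + l) ^ α - l ^ α) * b ^ α := by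
    rw [← add_mul, add_comm l, Real.mul_rpow (by linarith) hb, Real.mul_rpow hl₀ hb]
    ring
  linarith

theorem stmt_11 (a b μ l α : ℝ) (ha : 0 ≤ a) (hb : 0 ≤ b)
    (hμ0 : 0 < μ) (hμ1 : μ ≤ 1) (hl : 1 ≤ l)
    (h : l * b ≤ a) (hα0 : 0 ≤ α) (hα1 : α ≤ 1) :
    (a + μ * b) ^ α ≤ a ^ α + ((μ + l) ^ α - l ^ α) * b ^ α :=
  stmt_11_general a b μ l α hb hμ0 hl h hα0 hα1
end

section
/- Let a, b, c ≥ 0 with c ≥ a + μ·b for some μ ≥ 1, and a ≥ l·b for some l ≥ 1. Then for all α ≥ 1, c^α ≥ a^α + ((μ+l)^α - l^α)·b^α. -/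
/-! Since `t ↦ t ^ α` is convex on `[0, ∞)`, its increment over an interval of length `μ b`
can only grow as the interval moves right, from `[l b, (l + μ) b]` to `[a, a + μ b]`; by
homogeneity the first increment is `((l + μ) ^ α - l ^ α) b ^ α`, and `c ^ α ≥ (a + μ b) ^ α`. -/

open Real

/- Both `x` and `y + h` are convex combinations of `y` and `x + h`, with the same pair of
weights `(x - y) / (x + h - y)` and `h / (x + h - y)` in swapped order. -/
theorem ConvexOn.map_add_sub_map_le {𝕜 : Type*} [Field 𝕜] [LinearOrder 𝕜]
    [IsStrictOrderedRing 𝕜] {s : Set 𝕜} {f : 𝕜 → 𝕜} (hf : ConvexOn 𝕜 s f) {x y h : 𝕜}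
    (hy : y ∈ s) (hxh : x + h ∈ s) (hyx : y ≤ x) (hh : 0 ≤ h) :
    f (y + h) - f y ≤ f (x + h) - f x := by
  rcases (add_nonneg (sub_nonneg.2 hyx) hh).eq_or_lt with hd | hd
  · obtain rfl : h = 0 := by linarith
    obtain rfl : x = y := by linarith
    exact le_rfl
  set d := x - y + h
  have hsum : (x - y) / d + h / d = 1 := by rw [← add_div, div_self hd.ne']
  have hx := hf.2 hy hxh (div_nonneg hh hd.le) (div_nonneg (sub_nonneg.2 hyx) hd.le)
    (by rw [add_comm, hsum])
  have hyh := hf.2 hy hxh (div_nonneg (sub_nonneg.2 hyx) hd.le) (div_nonneg hh hd.le) hsum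
  simp only [smul_eq_mul] at hx hyh
  have ex : h / d * y + (x - y) / d * (x + h) = x := by field_simp; ring
  have eyh : (x - y) / d * y + h / d * (x + h) = y + h := by field_simp; ring
  rw [ex] at hx
  rw [eyh] at hyh
  linear_combination hx + hyh + (f y + f (x + h)) * hsum

theorem stmt_12_general (a b c μ l α : ℝ) (hb : 0 ≤ b)
    (hμ : 1 ≤ μ) (hl : 1 ≤ l)
    (h1 : a + μ * b ≤ c) (h2 : l * b ≤ a)
    (hα : 1 ≤ α) :
    c ^ α ≥ a ^ α + ((μ + l) ^ α - l ^ α) * b ^ α := by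
  have hlb : 0 ≤ l * b := mul_nonneg (by linarith) hb
  have hμb : 0 ≤ μ * b := mul_nonneg (by linarith) hb
  have hincr : (l * b + μ * b) ^ α - (l * b) ^ α ≤ (a + μ * b) ^ α - a ^ α :=
    (convexOn_rpow hα).map_add_sub_map_le (Set.mem_Ici.2 hlb)
      (Set.mem_Ici.2 (by linarith)) h2 hμb
  calc a ^ α + ((μ + l) ^ α - l ^ α) * b ^ α
      = a ^ α + ((l * b + μ * b) ^ α - (l * b) ^ α) := by
        rw [← add_mul, mul_rpow (by linarith) hb, mul_rpow (by linarith) hb, add_comm μ]; ring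
    _ ≤ (a + μ * b) ^ α := by linarith
    _ ≤ c ^ α := rpow_le_rpow (by linarith) h1 (by linarith)

theorem stmt_12 (a b c μ l α : ℝ) (ha : 0 ≤ a) (hb : 0 ≤ b) (hc : 0 ≤ c)
    (hμ : 1 ≤ μ) (hl : 1 ≤ l)
    (h1 : a + μ * b ≤ c) (h2 : l * b ≤ a)
    (hα : 1 ≤ α) :
    c ^ α ≥ a ^ α + ((μ + l) ^ α - l ^ α) * b ^ α :=
  stmt_12_general a b c μ l α hb hμ hl h1 h2 hα
end

section
/- Let N ≥ 2 and c₁,...,c_{N-1} ≥ 0, d₁,...,d_{N-1} ≥ 0 with d_{N-1} = c_{N-1}. Suppose for reals μᵢ ≥ 1, lᵢ ≥ 1 (1 ≤ i ≤ N-2): cᵢ ≥ lᵢ·dᵢ₊₁ and dᵢ ≥ cᵢ + μᵢ·dᵢ₊₁. Then for all α ≥ 1, d₁^α ≥ c₁^α + K₁c₂^α + K₁K₂c₃^α + ... + K₁⋯K_{N-2}c_{N-1}^α, where Kᵣ = (μᵣ+lᵣ)^α - lᵣ^α. -/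
/-! The key inequality is `a ^ α + ((μ + l) ^ α - l ^ α) * b ^ α ≤ (a + μ * b) ^ α` for `l * b ≤ a`:
after dividing by `b ^ α` it says that the increment `(t + μ) ^ α - t ^ α` of the convex function
`t ^ α` is larger at `t = a / b` than at `t = l`. At each level it gives
`c i ^ α + K i * d (i + 1) ^ α ≤ d i ^ α`, and unrolling this recursion from `d 1` down to
`d (N - 1) = c (N - 1)` produces the weighted sum. -/

open Finset

theorem ConvexOn.sub_le_sub_of_le {𝕜 : Type*} [Field 𝕜] [LinearOrder 𝕜] [IsStrictOrderedRing 𝕜]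
    {s : Set 𝕜} {f : 𝕜 → 𝕜} (hf : ConvexOn 𝕜 s f) {x y h : 𝕜} (hx : x ∈ s) (hyh : y + h ∈ s)
    (hh : 0 ≤ h) (hxy : x ≤ y) : f (x + h) - f x ≤ f (y + h) - f y := by
  rcases hh.eq_or_lt with rfl | hh
  · simp
  have hIcc := hf.1.ordConnected.out hx hyh
  have hxh : x + h ∈ s := hIcc ⟨by linarith, by linarith⟩
  have hy : y ∈ s := hIcc ⟨hxy, by linarith⟩
  have hslope : slope f x (x + h) ≤ slope f y (y + h) :=
    calc slope f x (x + h)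
      _ ≤ slope f x (y + h) :=
          hf.slope_mono hx ⟨hxh, by simpa using hh.ne'⟩ ⟨hyh, (show x < y + h by linarith).ne'⟩
            (by linarith)
      _ = slope f (y + h) x := slope_comm f x (y + h)
      _ ≤ slope f (y + h) y :=
          hf.slope_mono hyh ⟨hx, (show x < y + h by linarith).ne⟩ ⟨hy, by simpa using hh.ne'⟩ hxy
      _ = slope f y (y + h) := slope_comm f (y + h) y
  simp only [slope_def_field, add_sub_cancel_left] at hslope
  exact (div_le_div_iff_of_pos_right hh).mp hslope

theorem rpow_add_mul_rpow_le_add_mul_rpow {α a b l μ : ℝ} (hα : 1 ≤ α) (hb : 0 ≤ b) (hl : 0 ≤ l)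
    (hμ : 0 ≤ μ) (hlb : l * b ≤ a) :
    a ^ α + ((μ + l) ^ α - l ^ α) * b ^ α ≤ (a + μ * b) ^ α := by
  rcases hb.eq_or_lt with rfl | hb
  · simp [Real.zero_rpow (by positivity : α ≠ 0)]
  have hla : l ≤ a / b := (le_div_iff₀ hb).mpr hlb
  have hgrowth : (l + μ) ^ α - l ^ α ≤ (a / b + μ) ^ α - (a / b) ^ α :=
    (convexOn_rpow hα).sub_le_sub_of_le (x := l) (y := a / b) hl
      (show 0 ≤ a / b + μ by linarith) hμ hla
  have hscale : ((a / b + μ) ^ α - (a / b) ^ α) * b ^ α = (a + μ * b) ^ α - a ^ α := by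
    rw [sub_mul, ← Real.mul_rpow (by linarith) hb.le, ← Real.mul_rpow (by linarith) hb.le,
      div_mul_cancel₀ _ hb.ne', add_mul, div_mul_cancel₀ _ hb.ne']
  rw [add_comm μ l]
  nlinarith [mul_le_mul_of_nonneg_right hgrowth (Real.rpow_nonneg hb.le α)]

theorem sum_range_prod_mul_le_of_add_mul_le {R : Type*} [CommSemiring R] [PartialOrder R]
    [IsOrderedRing R] {a b K : ℕ → R} {n : ℕ}
    (hK : ∀ i < n, 0 ≤ K i) (hab : ∀ i < n, a i + K i * b (i + 1) ≤ b i)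
    (hn : b n = a n) :
    ∑ i ∈ range (n + 1), (∏ r ∈ range i, K r) * a i ≤ b 0 := by
  have hinv : ∀ j ≤ n,
      ∑ i ∈ range j, (∏ r ∈ range i, K r) * a i + (∏ r ∈ range j, K r) * b j ≤ b 0 := by
    intro j hj
    induction j with
    | zero => simp
    | succ j ih =>
      have hP : 0 ≤ ∏ r ∈ range j, K r :=
        prod_nonneg fun r hr => hK r ((mem_range.mp hr).trans_le (by omega))
      calc ∑ i ∈ range (j + 1), (∏ r ∈ range i, K r) * a i
            + (∏ r ∈ range (j + 1), K r) * b (j + 1)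
        _ = ∑ i ∈ range j, (∏ r ∈ range i, K r) * a i
              + (∏ r ∈ range j, K r) * (a j + K j * b (j + 1)) := by
          rw [sum_range_succ, prod_range_succ]; ring
        _ ≤ ∑ i ∈ range j, (∏ r ∈ range i, K r) * a i + (∏ r ∈ range j, K r) * b j := by
          gcongr; exact hab j (by omega)
        _ ≤ b 0 := ih (by omega)
  simpa [sum_range_succ, hn] using hinv n le_rfl

@[to_additive sum_Icc_one_eq_sum_range]
theorem Finset.prod_Icc_one_eq_prod_range {M : Type*} [CommMonoid M] (f : ℕ → M) (n : ℕ) :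
    ∏ i ∈ Icc 1 n, f i = ∏ i ∈ range n, f (i + 1) := by
  rw [← Finset.Ico_add_one_right_eq_Icc, prod_Ico_eq_prod_range, add_tsub_cancel_right]
  simp only [add_comm]

theorem stmt_13_general (N : ℕ) (hN : 2 ≤ N) (c d μ l : ℕ → ℝ)
    (hd : ∀ i, 1 ≤ i → i ≤ N - 1 → 0 ≤ d i)
    (hμ : ∀ i, 1 ≤ i → i ≤ N - 2 → 1 ≤ μ i)
    (hl : ∀ i, 1 ≤ i → i ≤ N - 2 → 1 ≤ l i)
    (hlast : d (N - 1) = c (N - 1))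
    (h1 : ∀ i, 1 ≤ i → i ≤ N - 2 → l i * d (i + 1) ≤ c i)
    (h2 : ∀ i, 1 ≤ i → i ≤ N - 2 → c i + μ i * d (i + 1) ≤ d i)
    (α : ℝ) (hα : 1 ≤ α) :
    d 1 ^ α ≥ ∑ i ∈ Finset.Icc 1 (N - 1),
      (∏ r ∈ Finset.Icc 1 (i - 1),
        ((μ r + l r) ^ α - (l r) ^ α)) * c i ^ α := by
  have hK : ∀ i, 1 ≤ i → i ≤ N - 2 → 0 ≤ (μ i + l i) ^ α - l i ^ α := fun i hi hi' =>
    sub_nonneg.mpr (Real.rpow_le_rpow (by linarith [hl i hi hi']) (by linarith [hμ i hi hi'])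
      (by linarith))
  have hstep : ∀ i, 1 ≤ i → i ≤ N - 2 →
      c i ^ α + ((μ i + l i) ^ α - l i ^ α) * d (i + 1) ^ α ≤ d i ^ α := by
    intro i hi hi'
    have hdi : 0 ≤ d (i + 1) := hd (i + 1) (by omega) (by omega)
    have hli : 0 ≤ l i := by linarith [hl i hi hi']
    have hμi : 0 ≤ μ i := by linarith [hμ i hi hi']
    calc c i ^ α + ((μ i + l i) ^ α - l i ^ α) * d (i + 1) ^ α
      _ ≤ (c i + μ i * d (i + 1)) ^ α :=
          rpow_add_mul_rpow_le_add_mul_rpow hα hdi hli hμi (h1 i hi hi')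
      _ ≤ d i ^ α :=
          Real.rpow_le_rpow (add_nonneg ((mul_nonneg hli hdi).trans (h1 i hi hi'))
            (mul_nonneg hμi hdi)) (h2 i hi hi') (by linarith)
  have htelescope := sum_range_prod_mul_le_of_add_mul_le (n := N - 2)
    (a := fun i => c (i + 1) ^ α) (b := fun i => d (i + 1) ^ α)
    (K := fun i => (μ (i + 1) + l (i + 1)) ^ α - l (i + 1) ^ α)
    (fun i hi => hK (i + 1) (by omega) (by omega))
    (fun i hi => hstep (i + 1) (by omega) (by omega))
    (by simp only [show N - 2 + 1 = N - 1 by omega, hlast])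
  rw [ge_iff_le, Finset.sum_Icc_one_eq_sum_range, show N - 1 = N - 2 + 1 by omega]
  simpa only [zero_add, add_tsub_cancel_right, prod_Icc_one_eq_prod_range] using htelescope

theorem stmt_13 (N : ℕ) (hN : 2 ≤ N) (c d μ l : ℕ → ℝ)
    (hc : ∀ i, 1 ≤ i → i ≤ N - 1 → 0 ≤ c i)
    (hd : ∀ i, 1 ≤ i → i ≤ N - 1 → 0 ≤ d i)
    (hμ : ∀ i, 1 ≤ i → i ≤ N - 2 → 1 ≤ μ i)
    (hl : ∀ i, 1 ≤ i → i ≤ N - 2 → 1 ≤ l i)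
    (hlast : d (N - 1) = c (N - 1))
    (h1 : ∀ i, 1 ≤ i → i ≤ N - 2 → l i * d (i + 1) ≤ c i)
    (h2 : ∀ i, 1 ≤ i → i ≤ N - 2 → c i + μ i * d (i + 1) ≤ d i)
    (α : ℝ) (hα : 1 ≤ α) :
    d 1 ^ α ≥ ∑ i ∈ Finset.Icc 1 (N - 1),
      (∏ r ∈ Finset.Icc 1 (i - 1),
        ((μ r + l r) ^ α - (l r) ^ α)) * c i ^ α :=
  stmt_13_general N hN c d μ l hd hμ hl hlast h1 h2 α hα
end

section
/- Let N ≥ 2 and c₁,...,c_{N-1} ≥ 0, d₁,...,d_{N-1} ≥ 0 with d_{N-1} = c_{N-1}. Suppose for reals 0 < μᵢ ≤ 1, lᵢ ≥ 1 (1 ≤ i ≤ N-2): cᵢ ≥ lᵢ·dᵢ₊₁ and dᵢ ≤ cᵢ + μᵢ·dᵢ₊₁. Then for all 0 ≤ α ≤ 1, d₁^α ≤ c₁^α + K₁c₂^α + K₁K₂c₃^α + ... + K₁⋯K_{N-2}c_{N-1}^α, where Kᵣ = (μᵣ+lᵣ)^α - lᵣ^α. -/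
/-!
Concavity of `t ↦ t ^ α` makes the increments `(t + a) ^ α - t ^ α` decreasing in `t`. Taking
`t = lᵢ dᵢ₊₁ ≤ cᵢ` and `a = μᵢ dᵢ₊₁`, the bound `dᵢ ≤ cᵢ + μᵢ dᵢ₊₁` becomes
`dᵢ ^ α ≤ cᵢ ^ α + Kᵢ dᵢ₊₁ ^ α`, and unrolling this recursion down to `d (N - 1) = c (N - 1)`
gives the claim.
-/

open Finset

section Increments

variable {𝕜 : Type*} [Field 𝕜] [LinearOrder 𝕜] [IsStrictOrderedRing 𝕜] {s : Set 𝕜} {f : 𝕜 → 𝕜}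
  {x y a : 𝕜}

-- Both secants are compared with the secant over `[x, y + a]`.
theorem ConvexOn.map_add_sub_map_le_s14 (hf : ConvexOn 𝕜 s f) (hx : x ∈ s) (hya : y + a ∈ s)
    (hxy : x ≤ y) (ha : 0 ≤ a) : f (x + a) - f x ≤ f (y + a) - f y := by
  rcases ha.eq_or_lt with rfl | ha
  · simp
  have hxa : x + a ∈ s := hf.1.ordConnected.out hx hya ⟨by linarith, by linarith⟩
  have hy : y ∈ s := hf.1.ordConnected.out hx hya ⟨hxy, by linarith⟩
  have h₁ := hf.secant_mono hx hxa hya (by linarith) (by linarith) (by linarith)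
  have h₂ := hf.secant_mono hya hx hy (by linarith) (by linarith) hxy
  rw [add_sub_cancel_left] at h₁
  rw [← neg_div_neg_eq, neg_sub, neg_sub, ← neg_div_neg_eq (f y - _), neg_sub, neg_sub,
    add_sub_cancel_left] at h₂
  exact (div_le_div_iff_of_pos_right ha).1 (h₁.trans h₂)

theorem ConcaveOn.map_add_sub_map_le_s14 (hf : ConcaveOn 𝕜 s f) (hx : x ∈ s) (hya : y + a ∈ s)
    (hxy : x ≤ y) (ha : 0 ≤ a) : f (y + a) - f y ≤ f (x + a) - f x := by
  have := hf.neg.map_add_sub_map_le_s14 hx hya hxy ha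
  simp only [Pi.neg_apply] at this
  linarith

end Increments

theorem Real.rpow_le_rpow_add_mul_rpow_of_le_add_mul {c d e μ l α : ℝ} (hd : 0 ≤ d) (he : 0 ≤ e)
    (hμ : 0 ≤ μ) (hl : 0 ≤ l) (hc : l * e ≤ c) (hdc : d ≤ c + μ * e) (hα₀ : 0 ≤ α)
    (hα₁ : α ≤ 1) : d ^ α ≤ c ^ α + ((μ + l) ^ α - l ^ α) * e ^ α := by
  have hle : 0 ≤ l * e := mul_nonneg hl he
  have hμe : 0 ≤ μ * e := mul_nonneg hμ he
  calc d ^ α ≤ (c + μ * e) ^ α := Real.rpow_le_rpow hd hdc hα₀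
    _ ≤ c ^ α + ((l * e + μ * e) ^ α - (l * e) ^ α) := by
      have := (Real.concaveOn_rpow hα₀ hα₁).map_add_sub_map_le_s14 (Set.mem_Ici.2 hle)
        (Set.mem_Ici.2 (by linarith : 0 ≤ c + μ * e)) hc hμe
      linarith
    _ = c ^ α + ((μ + l) ^ α - l ^ α) * e ^ α := by
      rw [← add_mul, add_comm l, Real.mul_rpow (by linarith) he, Real.mul_rpow hl he]
      ring

theorem le_sum_Icc_prod_Ico_mul_of_le_add_mul {R : Type*} [CommSemiring R] [PartialOrder R]
    [IsOrderedRing R] {x y K : ℕ → R} {m n : ℕ} (hmn : m ≤ n) (hK : ∀ k ∈ Ico m n, 0 ≤ K k)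
    (hx : ∀ k ∈ Ico m n, x k ≤ y k + K k * x (k + 1)) (hxn : x n ≤ y n) :
    x m ≤ ∑ i ∈ Icc m n, (∏ r ∈ Ico m i, K r) * y i := by
  refine Nat.decreasingInduction' (P := fun k ↦ x k ≤ ∑ i ∈ Icc k n, (∏ r ∈ Ico k i, K r) * y i)
    (fun k hkn hmk ih ↦ ?_) hmn (by simpa)
  have hk : k ∈ Ico m n := mem_Ico.2 ⟨hmk, hkn⟩
  have hsplit : ∑ i ∈ Icc (k + 1) n, (∏ r ∈ Ico k i, K r) * y i =
      K k * ∑ i ∈ Icc (k + 1) n, (∏ r ∈ Ico (k + 1) i, K r) * y i := by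
    rw [mul_sum]
    refine sum_congr rfl fun i hi ↦ ?_
    rw [prod_eq_prod_Ico_succ_bot (by simp at hi; omega), mul_assoc]
  calc x k ≤ y k + K k * x (k + 1) := hx k hk
    _ ≤ y k + K k * ∑ i ∈ Icc (k + 1) n, (∏ r ∈ Ico (k + 1) i, K r) * y i := by
      gcongr
      exact hK k hk
    _ = ∑ i ∈ Icc k n, (∏ r ∈ Ico k i, K r) * y i := by
      rw [Icc_eq_cons_Ioc hkn.le, sum_cons, ← Icc_add_one_left_eq_Ioc, hsplit, Ico_self,
        prod_empty, one_mul]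

theorem stmt_14_general (N : ℕ) (hN : 2 ≤ N) (c d μ l : ℕ → ℝ)
    (hd : ∀ i, 1 ≤ i → i ≤ N - 1 → 0 ≤ d i)
    (hμ : ∀ i, 1 ≤ i → i ≤ N - 2 → 0 < μ i ∧ μ i ≤ 1)
    (hl : ∀ i, 1 ≤ i → i ≤ N - 2 → 1 ≤ l i)
    (hlast : d (N - 1) = c (N - 1))
    (h1 : ∀ i, 1 ≤ i → i ≤ N - 2 → l i * d (i + 1) ≤ c i)
    (h2 : ∀ i, 1 ≤ i → i ≤ N - 2 → d i ≤ c i + μ i * d (i + 1))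
    (α : ℝ) (hα0 : 0 ≤ α) (hα1 : α ≤ 1) :
    d 1 ^ α ≤ ∑ i ∈ Finset.Icc 1 (N - 1),
      (∏ r ∈ Finset.Icc 1 (i - 1),
        ((μ r + l r) ^ α - (l r) ^ α)) * c i ^ α := by
  have hbounds : ∀ k ∈ Ico 1 (N - 1), 1 ≤ k ∧ k ≤ N - 2 ∧ 0 ≤ μ k ∧ 0 ≤ l k := fun k hk ↦ by
    obtain ⟨hk₁, hk₂⟩ := mem_Ico.1 hk
    exact ⟨hk₁, by omega, (hμ k hk₁ (by omega)).1.le, by linarith [hl k hk₁ (by omega)]⟩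
  have key := le_sum_Icc_prod_Ico_mul_of_le_add_mul (x := fun i ↦ d i ^ α)
    (y := fun i ↦ c i ^ α) (K := fun r ↦ (μ r + l r) ^ α - l r ^ α) (by omega : 1 ≤ N - 1)
    (fun k hk ↦ by
      obtain ⟨-, -, hμk, hlk⟩ := hbounds k hk
      exact sub_nonneg.2 (Real.rpow_le_rpow hlk (le_add_of_nonneg_left hμk) hα0))
    (fun k hk ↦ by
      obtain ⟨hk₁, hk₂, hμk, hlk⟩ := hbounds k hk
      exact Real.rpow_le_rpow_add_mul_rpow_of_le_add_mul (hd k hk₁ (by omega))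
        (hd (k + 1) (by omega) (by omega)) hμk hlk (h1 k hk₁ hk₂) (h2 k hk₁ hk₂) hα0 hα1)
    (by rw [hlast])
  refine key.trans_eq (sum_congr rfl fun i hi ↦ ?_)
  rw [Icc_sub_one_right_eq_Ico_of_not_isMin (by simp at hi ⊢; omega)]

theorem stmt_14 (N : ℕ) (hN : 2 ≤ N) (c d μ l : ℕ → ℝ)
    (hc : ∀ i, 1 ≤ i → i ≤ N - 1 → 0 ≤ c i)
    (hd : ∀ i, 1 ≤ i → i ≤ N - 1 → 0 ≤ d i)
    (hμ : ∀ i, 1 ≤ i → i ≤ N - 2 → 0 < μ i ∧ μ i ≤ 1)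
    (hl : ∀ i, 1 ≤ i → i ≤ N - 2 → 1 ≤ l i)
    (hlast : d (N - 1) = c (N - 1))
    (h1 : ∀ i, 1 ≤ i → i ≤ N - 2 → l i * d (i + 1) ≤ c i)
    (h2 : ∀ i, 1 ≤ i → i ≤ N - 2 → d i ≤ c i + μ i * d (i + 1))
    (α : ℝ) (hα0 : 0 ≤ α) (hα1 : α ≤ 1) :
    d 1 ^ α ≤ ∑ i ∈ Finset.Icc 1 (N - 1),
      (∏ r ∈ Finset.Icc 1 (i - 1),
        ((μ r + l r) ^ α - (l r) ^ α)) * c i ^ α :=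
  stmt_14_general N hN c d μ l hd hμ hl hlast h1 h2 α hα0 hα1
end
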